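/- arXiv:1503.06303 — 2 statements merged into one kernel-verified Lean document; each statement's English description precedes it below -/
import Mathlib

section
/- Let d ≥ 2 and let ρ be a density matrix on ℂ^d. Then the following strengthened trade-off holds: C(ρ)²/(d-1)² + M(ρ) ≤ 1 − (d/(d-1))·(Σ_{i=1}^{d} ρ_{ii}² − 1/d), where C(ρ) is the l1-norm of coherence and M(ρ) is the mixedness. (Note that Σ_i ρ_{ii}² ≥ 1/d by Cauchy–Schwarz, so this refines the bound C(ρ)²/(d-1)² + M(ρ) ≤ 1 by a term measuring the deviation of the diagonal of ρ from the uniform distribution.) -/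
open scoped ComplexOrder

/-- The `l₁`-norm of coherence of a matrix `ρ` (in the standard basis):
the sum of the absolute values of the off-diagonal entries. -/
noncomputable def l1Coherence {d : ℕ} (ρ : Matrix (Fin d) (Fin d) ℂ) : ℝ :=
  ∑ i, ∑ j, if i = j then 0 else ‖ρ i j‖

/-- The mixedness (normalized linear entropy) of a `d × d` density matrix `ρ`:
`(d/(d-1)) * (1 - Tr(ρ²))`. -/
noncomputable def mixedness (d : ℕ) (ρ : Matrix (Fin d) (Fin d) ℂ) : ℝ :=
  ((d : ℝ) / ((d : ℝ) - 1)) * (1 - ((ρ * ρ).trace).re)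

/-!
For Hermitian `ρ`, `Tr ρ² = ∑ᵢⱼ |ρᵢⱼ|² = ∑ᵢ ρᵢᵢ² + S` with `S` the sum of the squared moduli of
the `d(d-1)` off-diagonal entries, and Cauchy–Schwarz over those entries gives `C² ≤ d(d-1) S`.
After expanding `M(ρ)`, the claim is exactly `C²/(d-1)² ≤ d/(d-1) · S`.
-/

namespace Finset

variable {ι : Type*}

theorem cast_card_offDiag {R : Type*} [Ring R] (s : Finset ι) :
    (#s.offDiag : R) = #s * (#s - 1) := by
  rw [offDiag_card, Nat.cast_sub (Nat.le_mul_self _), Nat.cast_mul, mul_sub_one]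

variable [DecidableEq ι]

theorem sum_sum_eq_sum_add_sum_offDiag {M : Type*} [AddCommMonoid M] (s : Finset ι)
    (f : ι → ι → M) :
    ∑ i ∈ s, ∑ j ∈ s, f i j = ∑ i ∈ s, f i i + ∑ p ∈ s.offDiag, f p.1 p.2 := by
  rw [← sum_product', ← diag_union_offDiag, sum_union (disjoint_diag_offDiag _), diag, sum_map]
  rfl

theorem sum_sum_ite_eq_sum_offDiag {M : Type*} [AddCommMonoid M] (s : Finset ι)
    (f : ι → ι → M) :
    ∑ i ∈ s, ∑ j ∈ s, (if i = j then 0 else f i j) = ∑ p ∈ s.offDiag, f p.1 p.2 := by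
  rw [sum_sum_eq_sum_add_sum_offDiag]
  simp only [if_true, sum_const_zero, zero_add]
  exact sum_congr rfl fun p hp => if_neg (mem_offDiag.mp hp).2.2

end Finset

namespace Matrix

variable {n : Type*}

theorem IsHermitian.re_trace_mul_self [Fintype n] {A : Matrix n n ℂ} (hA : A.IsHermitian) :
    (A * A).trace.re = ∑ i, ∑ j, ‖A i j‖ ^ 2 := by
  simp only [trace, diag, mul_apply, Complex.re_sum]
  refine Finset.sum_congr rfl fun i _ => Finset.sum_congr rfl fun j _ => ?_
  rw [← hA.apply j i, Complex.star_def, Complex.mul_conj, Complex.ofReal_re,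
    Complex.normSq_eq_norm_sq]

theorem IsHermitian.norm_apply_self_sq {A : Matrix n n ℂ} (hA : A.IsHermitian) (i : n) :
    ‖A i i‖ ^ 2 = (A i i).re ^ 2 := by
  have him : (A i i).im = 0 := Complex.conj_eq_iff_im.mp (hA.apply i i)
  rw [Complex.sq_norm, Complex.normSq_apply, him]
  ring

end Matrix

open Finset

theorem l1Coherence_sq_le {d : ℕ} (ρ : Matrix (Fin d) (Fin d) ℂ) :
    l1Coherence ρ ^ 2 ≤ d * (d - 1) * ∑ p ∈ univ.offDiag, ‖ρ p.1 p.2‖ ^ 2 := by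
  rw [l1Coherence, sum_sum_ite_eq_sum_offDiag]
  have hCS := sq_sum_le_card_mul_sum_sq (s := univ.offDiag)
    (f := fun p : Fin d × Fin d => ‖ρ p.1 p.2‖)
  rwa [cast_card_offDiag, card_univ, Fintype.card_fin] at hCS

theorem mixedness_eq {d : ℕ} {ρ : Matrix (Fin d) (Fin d) ℂ} (hρ : ρ.IsHermitian) :
    mixedness d ρ =
      d / (d - 1) * (1 - ∑ i, (ρ i i).re ^ 2 - ∑ p ∈ univ.offDiag, ‖ρ p.1 p.2‖ ^ 2) := by
  rw [mixedness, hρ.re_trace_mul_self, sum_sum_eq_sum_add_sum_offDiag]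
  simp only [hρ.norm_apply_self_sq]
  ring

theorem coherence_mixedness_tradeoff_strong_general {d : ℕ} (hd : 2 ≤ d)
    (ρ : Matrix (Fin d) (Fin d) ℂ) (hpsd : ρ.PosSemidef) :
    l1Coherence ρ ^ 2 / ((d : ℝ) - 1) ^ 2 + mixedness d ρ ≤
      1 - ((d : ℝ) / ((d : ℝ) - 1)) * ((∑ i, (ρ i i).re ^ 2) - 1 / (d : ℝ)) := by
  have hd₀ : (0 : ℝ) < d := by positivity
  have hd₁ : (0 : ℝ) < d - 1 := sub_pos.mpr (by exact_mod_cast hd)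
  set D := ∑ i, (ρ i i).re ^ 2
  set S := ∑ p ∈ univ.offDiag, ‖ρ p.1 p.2‖ ^ 2
  have hC : l1Coherence ρ ^ 2 / ((d : ℝ) - 1) ^ 2 ≤ d / (d - 1) * S := by
    rw [div_le_iff₀ (by positivity)]
    calc l1Coherence ρ ^ 2 ≤ d * (d - 1) * S := l1Coherence_sq_le ρ
      _ = d / (d - 1) * S * (d - 1) ^ 2 := by field_simp
  have hM : mixedness d ρ = 1 - d / (d - 1) * (D - 1 / d) - d / (d - 1) * S := by
    rw [mixedness_eq hpsd.1]
    field_simp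
    ring
  linarith

/-- **Strengthened coherence–mixedness trade-off.**  For any density matrix `ρ` on `ℂ^d`
(`d ≥ 2`), `C(ρ)²/(d-1)² + M(ρ) ≤ 1 - (d/(d-1)) (∑ᵢ ρᵢᵢ² - 1/d)`. -/
theorem coherence_mixedness_tradeoff_strong {d : ℕ} (hd : 2 ≤ d)
    (ρ : Matrix (Fin d) (Fin d) ℂ) (hpsd : ρ.PosSemidef) (htr : ρ.trace = 1) :
    l1Coherence ρ ^ 2 / ((d : ℝ) - 1) ^ 2 + mixedness d ρ ≤
      1 - ((d : ℝ) / ((d : ℝ) - 1)) * ((∑ i, (ρ i i).re ^ 2) - 1 / (d : ℝ)) :=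
  coherence_mixedness_tradeoff_strong_general hd ρ hpsd
end

section
/- Let d ≥ 2 and let ρ be a density matrix on ℂ^d attaining equality in the coherence–mixedness trade-off, i.e. C(ρ)²/(d−1)² + M(ρ) = 1, where C(ρ) is the l1-norm of coherence and M(ρ) is the mixedness. Then every diagonal entry of ρ equals 1/d, and every off-diagonal entry of ρ has modulus √(1 − M(ρ))/d. -/
/-!
Write `aᵢ = ρᵢᵢ` (real, summing to `1`), `S = ∑_{i≠j} |ρᵢⱼ|²` and `C = ∑_{i≠j} |ρᵢⱼ|`, so that
`Tr ρ² = ∑ aᵢ² + S`. Cauchy–Schwarz gives `1 ≤ d ∑ aᵢ²` and `C² ≤ d(d-1) S`, while the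
saturated trade-off reads `C² = d(d-1) S + (d-1)(d ∑ aᵢ² - 1)`. Hence both Cauchy–Schwarz
inequalities are equalities, which forces the `aᵢ` to be constant, and likewise the `|ρᵢⱼ|`
with `i ≠ j`.
-/

open scoped ComplexOrder

open Finset

theorem Finset.eq_sum_div_card_of_card_mul_sum_sq_le {ι α : Type*} [Field α] [LinearOrder α]
    [IsStrictOrderedRing α] {s : Finset ι} {f : ι → α}
    (h : #s * ∑ i ∈ s, f i ^ 2 ≤ (∑ i ∈ s, f i) ^ 2) :
    ∀ i ∈ s, f i = (∑ j ∈ s, f j) / #s := by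
  obtain rfl | hs := s.eq_empty_or_nonempty
  · simp
  set m := (∑ j ∈ s, f j) / #s
  have hcard : (0 : α) < #s := by exact_mod_cast hs.card_pos
  have hvar : ∑ i ∈ s, (f i - m) ^ 2 = ∑ i ∈ s, f i ^ 2 - (∑ i ∈ s, f i) ^ 2 / #s := by
    simp only [sub_sq, sum_add_distrib, sum_sub_distrib, ← sum_mul, ← mul_sum, sum_const,
      nsmul_eq_mul, m]
    field_simp
    ring
  have hzero : ∑ i ∈ s, (f i - m) ^ 2 = 0 := by
    refine le_antisymm ?_ (sum_nonneg fun _ _ => sq_nonneg _)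
    rw [hvar, sub_nonpos, le_div_iff₀ hcard]
    linarith
  intro i hi
  have := (sum_eq_zero_iff_of_nonneg fun _ _ => sq_nonneg _).1 hzero i hi
  exact sub_eq_zero.1 (pow_eq_zero_iff two_ne_zero |>.1 this)

theorem Fintype.sum_sum_eq_sum_add_sum_offDiag {ι M : Type*} [Fintype ι] [DecidableEq ι]
    [AddCommMonoid M] (f : ι → ι → M) :
    ∑ i, ∑ j, f i j = ∑ i, f i i + ∑ p ∈ univ.offDiag, f p.1 p.2 := by
  rw [← sum_product', ← diag_union_offDiag, sum_union (disjoint_diag_offDiag _), sum_diag]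

theorem Matrix.IsHermitian.re_trace_mul_self_s4 {n 𝕜 : Type*} [Fintype n] [DecidableEq n]
    [RCLike 𝕜] {A : Matrix n n 𝕜} (hA : A.IsHermitian) :
    RCLike.re (A * A).trace =
      ∑ i, RCLike.re (A i i) ^ 2 + ∑ p ∈ univ.offDiag, ‖A p.1 p.2‖ ^ 2 := by
  have hentry (i j : n) : A i j * A j i = ((‖A i j‖ ^ 2 : ℝ) : 𝕜) := by
    rw [← hA.apply j i, RCLike.star_def, RCLike.mul_conj, RCLike.ofReal_pow]
  have hdiag (i : n) : ‖A i i‖ ^ 2 = RCLike.re (A i i) ^ 2 := by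
    rw [← hA.coe_re_apply_self i, RCLike.norm_ofReal, sq_abs, RCLike.ofReal_re]
  simp only [trace, diag_apply, mul_apply, hentry, map_sum, RCLike.ofReal_re]
  rw [Fintype.sum_sum_eq_sum_add_sum_offDiag (fun i j => ‖A i j‖ ^ 2)]
  simp only [hdiag]

theorem l1Coherence_eq_sum_offDiag {d : ℕ} (ρ : Matrix (Fin d) (Fin d) ℂ) :
    l1Coherence ρ = ∑ p ∈ univ.offDiag, ‖ρ p.1 p.2‖ := by
  rw [l1Coherence, Fintype.sum_sum_eq_sum_add_sum_offDiag]
  simp only [if_true, sum_const_zero, zero_add]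
  exact sum_congr rfl fun p hp => if_neg (mem_offDiag.1 hp).2.2

theorem card_mul_le_of_coherence_mixedness_tradeoff_eq {n A S C : ℝ} (hn : 1 < n)
    (hC : C ^ 2 ≤ n * (n - 1) * S) (hA : 1 ≤ n * A)
    (heq : C ^ 2 / (n - 1) ^ 2 + n / (n - 1) * (1 - (A + S)) = 1) :
    n * A ≤ 1 ∧ n * (n - 1) * S ≤ C ^ 2 := by
  have hn1 : n - 1 ≠ 0 := by linarith
  have key : C ^ 2 = n * (n - 1) * S + (n - 1) * (n * A - 1) := by
    field_simp at heq
    linear_combination heq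
  constructor <;> nlinarith

/-- **Structure of states saturating the coherence–mixedness trade-off.**
If a density matrix `ρ` on `ℂ^d` (`d ≥ 2`) attains equality
`C(ρ)²/(d-1)² + M(ρ) = 1`, then all its diagonal entries equal `1/d` and all its
off-diagonal entries have modulus `√(1 - M(ρ))/d`. -/
theorem eq_tradeoff_implies_mcms_form {d : ℕ} (hd : 2 ≤ d)
    (ρ : Matrix (Fin d) (Fin d) ℂ) (hpsd : ρ.PosSemidef) (htr : ρ.trace = 1)
    (heq : l1Coherence ρ ^ 2 / ((d : ℝ) - 1) ^ 2 + mixedness d ρ = 1) :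
    (∀ i, ρ i i = (1 / d : ℂ)) ∧
    (∀ i j, i ≠ j → ‖ρ i j‖ = Real.sqrt (1 - mixedness d ρ) / d) := by
  have hherm := hpsd.1
  have hn : (1 : ℝ) < d := by exact_mod_cast hd
  have hcard : (#(univ : Finset (Fin d)).offDiag : ℝ) = d * (d - 1) := by
    rw [offDiag_card, card_univ, Fintype.card_fin, Nat.cast_sub (Nat.le_mul_self d)]
    push_cast
    ring
  have hsum : ∑ i, (ρ i i).re = 1 := by simpa [Matrix.trace] using congrArg Complex.re htr
  have hoff := l1Coherence_eq_sum_offDiag ρ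
  have hmix : mixedness d ρ = d / (d - 1) * (1 - (∑ i, (ρ i i).re ^ 2 +
      ∑ p ∈ univ.offDiag, ‖ρ p.1 p.2‖ ^ 2)) := by
    rw [mixedness, ← RCLike.re_to_complex, hherm.re_trace_mul_self_s4]
    rfl
  obtain ⟨hdiagCS, hoffCS⟩ := card_mul_le_of_coherence_mixedness_tradeoff_eq hn
    (by rw [hoff, ← hcard]; exact sq_sum_le_card_mul_sum_sq)
    (by simpa [hsum] using sq_sum_le_card_mul_sum_sq (s := univ) (f := fun i => (ρ i i).re))
    (hmix ▸ heq)
  have hsqrt : √(1 - mixedness d ρ) = l1Coherence ρ / (d - 1) := by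
    rw [show 1 - mixedness d ρ = (l1Coherence ρ / (d - 1)) ^ 2 by rw [div_pow]; linarith,
      Real.sqrt_sq (div_nonneg (hoff ▸ sum_nonneg fun _ _ => norm_nonneg _) (by linarith))]
  refine ⟨fun i => ?_, fun i j hij => ?_⟩
  · have hconst := eq_sum_div_card_of_card_mul_sum_sq_le (f := fun i => (ρ i i).re)
      (by simpa [hsum] using hdiagCS) i (mem_univ i)
    rw [← hherm.coe_re_apply_self i, RCLike.re_to_complex, hconst, hsum]
    simp
  · have hconst := eq_sum_div_card_of_card_mul_sum_sq_le (f := fun p => ‖ρ p.1 p.2‖)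
      (by rwa [hcard, ← hoff]) (i, j) (by simpa using hij)
    rw [hconst, ← hoff, hcard, hsqrt]
    field_simp
end
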